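/- Let M be a matroid on {1, …, n} with base family 𝓑. Define iterates of the adjacency operation by A⁰(𝓑) = 𝓑 and A^{ℓ+1}(𝓑) = A(A^ℓ(𝓑)). Then for every ℓ ≥ 0, A^ℓ(𝓑) = S_ℓ(𝓑); that is, the family of ℓ-th multigraded shift supports of a matroidal ideal is obtained by taking ℓ times iterated adjacency families starting from 𝓑. -/

import Mathlib

/-- Two sets are *adjacent* if each has exactly one element outside the other. -/
def AdjacentSets {α : Type*} (B C : Set α) : Prop :=
  (B \ C).ncard = 1 ∧ (C \ B).ncard = 1

/-- The *adjacency family* of a family of sets: all unions of adjacent pairs of members. -/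
def adjFam {α : Type*} (𝓕 : Set (Set α)) : Set (Set α) :=
  {U | ∃ B ∈ 𝓕, ∃ C ∈ 𝓕, AdjacentSets B C ∧ U = B ∪ C}

/-- For a family `𝓑` of subsets of `{1, …, n}` (ordered so that `i >_lex j ↔ i < j` as
integers) and `B ∈ 𝓑`, the set `set(B)` consists of all `e ∉ B` for which there exists
`t ∈ B` with `e >_lex t` (that is, `e < t`) and `(B \ {t}) ∪ {e} ∈ 𝓑`. -/
def lexSet {n : ℕ} (𝓑 : Set (Set (Fin n))) (B : Set (Fin n)) : Set (Fin n) :=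
  {e | e ∉ B ∧ ∃ t ∈ B, e < t ∧ insert e (B \ {t}) ∈ 𝓑}

/-- `S_ℓ(𝓑) = { B ∪ E : B ∈ 𝓑, E ⊆ set(B), |E| = ℓ }`, the family of supports of the
`ℓ`-th multigraded shifts of the matroidal ideal of `𝓑`. -/
def shiftFam {n : ℕ} (𝓑 : Set (Set (Fin n))) (ℓ : ℕ) : Set (Set (Fin n)) :=
  {U | ∃ B ∈ 𝓑, ∃ E, E ⊆ lexSet 𝓑 B ∧ E.ncard = ℓ ∧ U = B ∪ E}

/-!
Both families have an order-free description: `S_ℓ(𝓑)` consists of the spanning sets without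
loops having `ℓ` elements more than a base. Indeed, a base of maximal weight `∑ x` inside such
a set `U` can be exchanged against every `e ∈ U` outside it (`e` is not a loop), and
maximality forces the removed element to be larger than `e`. On this description one step of
the adjacency operation raises `ℓ` by one: the union of adjacent sets adds a single nonloop,
and conversely a spanning loopless set which is not a base is covered by two adjacent spanning
subsets `U \ {a}`, `U \ {b}` — take `a` outside a base `B ⊆ U` and `b` the element of `B`
exchanged against `a`.
-/

open Set

section AdjacentSets

variable {α : Type*} {U X Y : Set α} {a b : α}

lemma AdjacentSets.exists_union_eq_insert (h : AdjacentSets X Y) :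
    ∃ g ∈ Y, g ∉ X ∧ X ∪ Y = insert g X := by
  obtain ⟨g, hg⟩ := ncard_eq_one.1 h.2
  have hgYX : g ∈ Y \ X := hg ▸ mem_singleton g
  refine ⟨g, hgYX.1, hgYX.2, ?_⟩
  rw [← union_sdiff_self, hg, union_singleton]

lemma adjacentSets_sdiff_singleton (ha : a ∈ U) (hb : b ∈ U) (hab : a ≠ b) :
    AdjacentSets (U \ {a}) (U \ {b}) := by
  have key : ∀ {a b : α}, a ∈ U → b ∈ U → a ≠ b → (U \ {a}) \ (U \ {b}) = {b} := by
    intro a b ha hb hab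
    ext x
    simp only [mem_sdiff, mem_singleton_iff, not_and, not_not]
    grind
  exact ⟨by rw [key ha hb hab, ncard_singleton], by rw [key hb ha hab.symm, ncard_singleton]⟩

lemma sdiff_singleton_union_sdiff_singleton (hab : a ≠ b) : U \ {a} ∪ U \ {b} = U := by
  ext x
  simp only [mem_union, mem_sdiff, mem_singleton_iff]
  grind

end AdjacentSets

namespace Matroid

section

variable {α : Type*} {M : Matroid α} {B U X : Set α} {e : α}

lemma IsBase.exists_insert_sdiff_singleton_isBase (hB : M.IsBase B) (he : M.IsNonloop e)
    (heB : e ∉ B) : ∃ t ∈ B, M.IsBase (insert e (B \ {t})) := by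
  have hC := hB.fundCircuit_isCircuit he.mem_ground heB
  obtain ⟨t, htC, hte⟩ : ∃ t ∈ M.fundCircuit e B, t ≠ e := by
    by_contra! h
    exact (hC.dep.superset h (singleton_subset_iff.2 he.mem_ground)).not_indep he.indep
  have htB : t ∈ B := (mem_insert_iff.1 (M.fundCircuit_subset_insert e B htC)).resolve_left hte
  have hindep := (hB.indep.mem_fundCircuit_iff (by rw [hB.closure_eq]; exact he.mem_ground)
    heB).1 htC
  rw [← insert_sdiff_singleton_comm hte.symm] at hindep
  exact ⟨t, htB, hB.exchange_isBase_of_indep heB hindep⟩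

lemma Spanning.exists_ne_spanning_sdiff_singleton (hU : M.Spanning U) (hUB : ¬ M.IsBase U)
    (hnl : ∀ e ∈ U, M.IsNonloop e) :
    ∃ a ∈ U, ∃ b ∈ U, a ≠ b ∧ M.Spanning (U \ {a}) ∧ M.Spanning (U \ {b}) := by
  obtain ⟨B, hB, hBU⟩ := hU.exists_isBase_subset
  obtain ⟨a, haU, haB⟩ := exists_of_ssubset (hBU.ssubset_of_ne fun h ↦ hUB (h ▸ hB))
  obtain ⟨b, hbB, hb⟩ := hB.exists_insert_sdiff_singleton_isBase (hnl a haU) haB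
  have hab : a ≠ b := fun h ↦ haB (h ▸ hbB)
  have hUE := hU.subset_ground
  refine ⟨a, haU, b, hBU hbB, hab, hB.spanning.superset (subset_sdiff_singleton hBU haB)
    (sdiff_subset.trans hUE), hb.spanning.superset ?_ (sdiff_subset.trans hUE)⟩
  exact insert_subset ⟨haU, hab⟩ (sdiff_subset_sdiff_left hBU)

-- Only meaningful for finite rank: if `M.eRank = ⊤`, the cardinality condition is vacuous.
def looplessSpanningSets (M : Matroid α) (k : ℕ) : Set (Set α) :=
  {U | M.Spanning U ∧ (∀ e ∈ U, M.IsNonloop e) ∧ U.encard = M.eRank + k}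

variable {k : ℕ}

lemma insert_mem_looplessSpanningSets (hX : X ∈ M.looplessSpanningSets k) (he : M.IsNonloop e)
    (heX : e ∉ X) : insert e X ∈ M.looplessSpanningSets (k + 1) := by
  obtain ⟨hXs, hXnl, hXcard⟩ := hX
  refine ⟨hXs.superset (subset_insert e X) (insert_subset he.mem_ground hXs.subset_ground),
    forall_mem_insert.2 ⟨he, hXnl⟩, ?_⟩
  rw [encard_insert_of_notMem heX, hXcard, Nat.cast_succ, add_assoc]

lemma sdiff_singleton_mem_looplessSpanningSets (hU : U ∈ M.looplessSpanningSets (k + 1))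
    (he : e ∈ U) (hs : M.Spanning (U \ {e})) : U \ {e} ∈ M.looplessSpanningSets k := by
  obtain ⟨-, hnl, hcard⟩ := hU
  have h : (U \ {e}).encard + 1 = M.eRank + k + 1 := by
    rw [encard_sdiff_singleton_add_one he, hcard, Nat.cast_succ, add_assoc]
  exact ⟨hs, fun x hx ↦ hnl x hx.1, ENat.add_left_injective_of_ne_top ENat.one_ne_top h⟩

variable [M.RankFinite]

lemma looplessSpanningSets_zero : M.looplessSpanningSets 0 = {B | M.IsBase B} := by
  ext U
  refine ⟨fun ⟨hU, _, hcard⟩ ↦ ?_, fun hU ↦ ?_⟩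
  · obtain ⟨B, hB, hBU⟩ := hU.exists_isBase_subset
    rwa [← hB.finite.eq_of_subset_of_encard_le hBU (by rw [hcard, hB.encard_eq_eRank]; simp)]
  · exact ⟨hU.spanning, fun e he ↦ hU.indep.isNonloop_of_mem he, by simp [hU.encard_eq_eRank]⟩

lemma not_isBase_of_mem_looplessSpanningSets_succ (hU : U ∈ M.looplessSpanningSets (k + 1)) :
    ¬ M.IsBase U := by
  intro hB
  have hcard := hU.2.2
  rw [hB.encard_eq_eRank, ← add_zero M.eRank, add_assoc, zero_add] at hcard
  exact k.succ_ne_zero <| by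
    exact_mod_cast (ENat.add_right_injective_of_ne_top (M.eRank_ne_top_iff.2 ‹_›) hcard).symm

lemma adjFam_looplessSpanningSets (k : ℕ) :
    adjFam (M.looplessSpanningSets k) = M.looplessSpanningSets (k + 1) := by
  ext U
  constructor
  · rintro ⟨X, hX, Y, hY, hXY, rfl⟩
    obtain ⟨g, hgY, hgX, hunion⟩ := hXY.exists_union_eq_insert
    rw [hunion]
    exact insert_mem_looplessSpanningSets hX (hY.2.1 g hgY) hgX
  · intro hU
    obtain ⟨a, ha, b, hb, hab, hsa, hsb⟩ := hU.1.exists_ne_spanning_sdiff_singleton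
      (not_isBase_of_mem_looplessSpanningSets_succ hU) hU.2.1
    exact ⟨U \ {a}, sdiff_singleton_mem_looplessSpanningSets hU ha hsa,
      U \ {b}, sdiff_singleton_mem_looplessSpanningSets hU hb hsb,
      adjacentSets_sdiff_singleton ha hb hab, (sdiff_singleton_union_sdiff_singleton hab).symm⟩

end

section

variable {n : ℕ} {M : Matroid (Fin n)}

lemma shiftFam_subset_looplessSpanningSets (ℓ : ℕ) :
    shiftFam {B | M.IsBase B} ℓ ⊆ M.looplessSpanningSets ℓ := by
  rintro _ ⟨B, hB, E, hE, rfl, rfl⟩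
  have hB : M.IsBase B := hB
  have hEnl : ∀ e ∈ E, M.IsNonloop e := fun e he ↦ by
    obtain ⟨-, t, -, -, ht⟩ := hE he
    exact ht.indep.isNonloop_of_mem (mem_insert e _)
  have hdisj : Disjoint B E := disjoint_right.2 fun e he ↦ (hE he).1
  refine ⟨hB.spanning.superset subset_union_left
    (union_subset hB.subset_ground fun e he ↦ (hEnl e he).mem_ground),
    fun e he ↦ he.elim (hB.indep.isNonloop_of_mem ·) (hEnl e ·), ?_⟩
  rw [encard_union_eq hdisj, hB.encard_eq_eRank, (toFinite E).cast_ncard_eq]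

lemma sdiff_subset_lexSet_of_forall_weight_le {B U : Set (Fin n)} (hB : M.IsBase B)
    (hBU : B ⊆ U) (hnl : ∀ e ∈ U, M.IsNonloop e)
    (hmax : ∀ B', M.IsBase B' → B' ⊆ U → ∑ᶠ x ∈ B', (x : ℕ) ≤ ∑ᶠ x ∈ B, (x : ℕ)) :
    U \ B ⊆ lexSet {B | M.IsBase B} B := by
  rintro e ⟨heU, heB⟩
  obtain ⟨t, htB, ht⟩ := hB.exists_insert_sdiff_singleton_isBase (hnl e heU) heB
  refine ⟨heB, t, htB, ?_, ht⟩
  have hle := hmax _ ht (insert_subset heU (sdiff_subset.trans hBU))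
  have hsplit : ∑ᶠ x ∈ B, (x : ℕ) = t + ∑ᶠ x ∈ B \ {t}, (x : ℕ) := by
    rw [← finsum_mem_insert _ (fun h ↦ h.2 rfl) (toFinite _), insert_sdiff_singleton,
      insert_eq_of_mem htB]
  rw [hsplit, finsum_mem_insert _ (fun h ↦ heB h.1) (toFinite _)] at hle
  have het : e ≠ t := fun h ↦ heB (h ▸ htB)
  exact lt_of_le_of_ne (Fin.le_iff_val_le_val.2 (by omega)) het

lemma looplessSpanningSets_subset_shiftFam (ℓ : ℕ) :
    M.looplessSpanningSets ℓ ⊆ shiftFam {B | M.IsBase B} ℓ := by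
  rintro U ⟨hU, hnl, hcard⟩
  obtain ⟨B, ⟨hB, hBU⟩, hmax⟩ := exists_max_image {B | M.IsBase B ∧ B ⊆ U}
    (fun B ↦ ∑ᶠ x ∈ B, (x : ℕ)) (toFinite _) hU.exists_isBase_subset
  refine ⟨B, hB, U \ B, sdiff_subset_lexSet_of_forall_weight_le hB hBU hnl
    (fun B' hB' hB'U ↦ hmax B' ⟨hB', hB'U⟩), ?_, (union_sdiff_cancel hBU).symm⟩
  have h : (U \ B).encard + M.eRank = ℓ + M.eRank := by
    rw [← hB.encard_eq_eRank, encard_sdiff_add_encard_of_subset hBU, hcard, hB.encard_eq_eRank,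
      add_comm]
  rw [ncard_def, ENat.add_left_injective_of_ne_top (M.eRank_ne_top_iff.2 inferInstance) h,
    ENat.toNat_natCast]

lemma shiftFam_setOf_isBase (ℓ : ℕ) : shiftFam {B | M.IsBase B} ℓ = M.looplessSpanningSets ℓ :=
  (shiftFam_subset_looplessSpanningSets ℓ).antisymm (looplessSpanningSets_subset_shiftFam ℓ)

end

end Matroid

theorem iterated_adjFam_eq_shiftFam_general {n : ℕ} (M : Matroid (Fin n))
    (𝓑 : Set (Set (Fin n))) (h𝓑 : 𝓑 = {B | M.IsBase B}) :
    ∀ ℓ : ℕ, adjFam^[ℓ] 𝓑 = shiftFam 𝓑 ℓ := by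
  subst h𝓑
  intro ℓ
  rw [M.shiftFam_setOf_isBase ℓ]
  induction ℓ with
  | zero => exact M.looplessSpanningSets_zero.symm
  | succ ℓ ih => rw [Function.iterate_succ_apply', ih, M.adjFam_looplessSpanningSets]

/-- Let `M` be a matroid on `{1, …, n}` with base family `𝓑`.  Define
iterates of the adjacency operation by `A⁰(𝓑) = 𝓑` and `A^{ℓ+1}(𝓑) = A(A^ℓ(𝓑))`.  Then
for every `ℓ ≥ 0`, `A^ℓ(𝓑) = S_ℓ(𝓑)`: the family of `ℓ`-th multigraded shift supports
of a matroidal ideal is obtained by taking `ℓ` times iterated adjacency families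
starting from `𝓑`. -/
theorem iterated_adjFam_eq_shiftFam {n : ℕ} (M : Matroid (Fin n))
    (hE : M.E = Set.univ) (𝓑 : Set (Set (Fin n))) (h𝓑 : 𝓑 = {B | M.IsBase B}) :
    ∀ ℓ : ℕ, adjFam^[ℓ] 𝓑 = shiftFam 𝓑 ℓ :=
  iterated_adjFam_eq_shiftFam_general M 𝓑 h𝓑
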